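/- Let $\alpha > 1$ and suppose $c\, n i^{-\alpha} \le \lambda_i^{(n)} \le C n i^{-\alpha}$ for all $1 \le i \le n$ with $0 < c \le C$, and let $\tau^2, \sigma^2 > 0$. Then for $b_{ni} = \lambda_i^{(n)}/(\tau^2 + \sigma^2\lambda_i^{(n)})$, the ratio $\left(\sum_{i=1}^n b_{ni}\right) / \left(\sum_{i=1}^n b_{ni}^2\right)$ is bounded above and below by positive constants independent of $n$ (for $n$ large). -/

import Mathlib

/-!
Write `bᵢ = λᵢ / (τ² + σ² λᵢ)`, so that `0 ≤ σ² bᵢ ≤ 1`; the lower bound is the termwise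
inequality `σ² bᵢ² ≤ bᵢ`. For the upper bound choose `m ≍ n^{1/α}`, namely
`m^α ≤ n ≤ (2m)^α`. For `i ≤ m` we have `n i^{-α} ≥ 1`, hence `λᵢ ≥ c` and
`bᵢ ≥ c / (τ² + σ² c)`, so `∑ bᵢ² ≳ m`. Conversely `∑_{i ≤ m} bᵢ ≤ m / σ²`, while
`bᵢ ≤ λᵢ / τ² ≤ C n i^{-α} / τ²` and the integral test give
`∑_{i > m} bᵢ ≲ n m^{1-α} ≲ m`. Thus both sums are of order `m`.
-/

open Finset Filter

lemma exists_nat_rpow_le_le_two_mul_rpow {α x : ℝ} (hα : 0 < α) (hx : 1 ≤ x) :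
    ∃ m : ℕ, 1 ≤ m ∧ (m : ℝ) ^ α ≤ x ∧ x ≤ (2 * m) ^ α := by
  set y := x ^ α⁻¹
  have hy : 1 ≤ y := Real.one_le_rpow hx (inv_nonneg.2 hα.le)
  have hxy : x = y ^ α := (Real.rpow_inv_rpow (by linarith) hα.ne').symm
  have hm : 1 ≤ ⌊y⌋₊ := Nat.le_floor (by simpa using hy)
  refine ⟨⌊y⌋₊, hm, ?_, ?_⟩
  · rw [hxy]
    exact Real.rpow_le_rpow (Nat.cast_nonneg _) (Nat.floor_le (by linarith)) hα.le
  · have hm' : (1 : ℝ) ≤ ⌊y⌋₊ := by exact_mod_cast hm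
    rw [hxy]
    exact Real.rpow_le_rpow (by linarith) (by linarith [Nat.lt_floor_add_one y]) hα.le

lemma one_le_mul_rpow_neg {α x y : ℝ} (hy : 0 < y) (h : y ^ α ≤ x) : 1 ≤ x * y ^ (-α) := by
  rw [Real.rpow_neg hy.le, ← div_eq_mul_inv, one_le_div (Real.rpow_pos_of_pos hy α)]
  exact h

lemma mul_rpow_one_sub_le {α x y : ℝ} (hy : 0 < y) (h : x ≤ (2 * y) ^ α) :
    x * y ^ (1 - α) ≤ 2 ^ α * y := by
  rw [Real.mul_rpow zero_le_two hy.le] at h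
  have hyα := Real.rpow_pos_of_pos hy α
  rw [Real.rpow_sub hy, Real.rpow_one, ← mul_div_assoc, div_le_iff₀ hyα]
  nlinarith

lemma sum_Ioc_rpow_neg_le {α : ℝ} (hα : 1 < α) {m : ℕ} (hm : 1 ≤ m) (n : ℕ) :
    ∑ i ∈ Ioc m n, (i : ℝ) ^ (-α) ≤ (m : ℝ) ^ (1 - α) / (α - 1) := by
  have hm0 : (0 : ℝ) < m := by exact_mod_cast hm
  have hanti : AntitoneOn (fun x : ℝ ↦ x ^ (-α)) (Set.Icc m n) :=
    (Real.antitoneOn_rpow_Ioi_of_exponent_nonpos (by linarith)).mono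
      fun x hx ↦ hm0.trans_le hx.1
  calc ∑ i ∈ Ioc m n, (i : ℝ) ^ (-α) = ∑ i ∈ Ico m n, ((i + 1 : ℕ) : ℝ) ^ (-α) := by
        rw [← Finset.Ico_add_one_add_one_eq_Ioc, ← Finset.sum_Ico_add']
    _ ≤ ∫ x in Set.Ioi (m : ℝ), x ^ (-α) :=
        hanti.sum_Ico_le_integral (integrableOn_Ioi_rpow_of_lt (by linarith) hm0)
          fun t ht ↦ Real.rpow_nonneg (hm0.trans ht).le _
    _ = (m : ℝ) ^ (1 - α) / (α - 1) := by
        rw [integral_Ioi_rpow_of_lt (by linarith) hm0, neg_div, ← div_neg]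
        ring_nf

section Weight

variable {τ σ x y : ℝ}

lemma mul_div_add_mul_le_one (hτ : 0 ≤ τ) (hσ : 0 ≤ σ) (hx : 0 ≤ x) :
    σ * (x / (τ + σ * x)) ≤ 1 :=
  mul_div_assoc' σ x _ ▸ div_le_one_of_le₀ (by linarith) (by positivity)

lemma div_add_mul_le_div (hτ : 0 < τ) (hσ : 0 ≤ σ) (hx : 0 ≤ x) :
    x / (τ + σ * x) ≤ x / τ :=
  div_le_div_of_nonneg_left hx hτ (le_add_of_nonneg_right (mul_nonneg hσ hx))

lemma div_add_mul_le_div_add_mul (hτ : 0 < τ) (hσ : 0 ≤ σ) (hx : 0 ≤ x) (hxy : x ≤ y) :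
    x / (τ + σ * x) ≤ y / (τ + σ * y) := by
  rw [div_le_div_iff₀ (by positivity) (by nlinarith)]
  nlinarith

lemma div_add_mul_le_inv (hτ : 0 ≤ τ) (hσ : 0 < σ) (hx : 0 ≤ x) :
    x / (τ + σ * x) ≤ σ⁻¹ := by
  simpa using (le_inv_mul_iff₀ hσ).2 (mul_div_add_mul_le_one hτ hσ.le hx)

end Weight

lemma mul_sum_sq_le_sum {ι : Type*} {s : Finset ι} {b : ι → ℝ} {σ : ℝ}
    (hb : ∀ i ∈ s, 0 ≤ b i) (hσb : ∀ i ∈ s, σ * b i ≤ 1) :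
    σ * ∑ i ∈ s, b i ^ 2 ≤ ∑ i ∈ s, b i := by
  rw [mul_sum]
  refine sum_le_sum fun i hi ↦ ?_
  nlinarith [hb i hi, hσb i hi]

lemma le_sum_div_add_mul_div_sum_sq {ι : Type*} {s : Finset ι} {l : ι → ℝ} {τ σ : ℝ}
    (hτ : 0 ≤ τ) (hσ : 0 ≤ σ) (hl : ∀ i ∈ s, 0 ≤ l i)
    (hpos : 0 < ∑ i ∈ s, (l i / (τ + σ * l i)) ^ 2) :
    σ ≤ (∑ i ∈ s, l i / (τ + σ * l i)) / ∑ i ∈ s, (l i / (τ + σ * l i)) ^ 2 :=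
  (le_div_iff₀ hpos).2 <| mul_sum_sq_le_sum
    (fun i hi ↦ div_nonneg (hl i hi) (by linarith [mul_nonneg hσ (hl i hi)]))
    fun i hi ↦ mul_div_add_mul_le_one hτ hσ (hl i hi)

section Spectrum

variable {τ σ α c C : ℝ} {l : ℕ → ℝ} {m n : ℕ}

lemma sum_div_add_mul_le (hτ : 0 < τ) (hσ : 0 < σ) (hα : 1 < α) (hC : 0 ≤ C)
    (hl : ∀ i ∈ Icc 1 n, 0 ≤ l i) (hub : ∀ i ∈ Icc 1 n, l i ≤ C * n * (i : ℝ) ^ (-α))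
    (hm : 1 ≤ m) (hmn : m ≤ n) (hnm : (n : ℝ) ≤ (2 * m) ^ α) :
    ∑ i ∈ Icc 1 n, l i / (τ + σ * l i) ≤ m * (σ⁻¹ + C * 2 ^ α / (τ * (α - 1))) := by
  have hm0 : (0 : ℝ) < m := by exact_mod_cast hm
  have hhead : ∑ i ∈ Ioc 0 m, l i / (τ + σ * l i) ≤ m * σ⁻¹ := by
    simpa using sum_le_card_nsmul (Ioc 0 m) _ _ fun i hi ↦
      div_add_mul_le_inv hτ.le hσ (hl i (by simp only [mem_Ioc, mem_Icc] at hi ⊢; omega))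
  have htail : ∑ i ∈ Ioc m n, l i / (τ + σ * l i) ≤ m * (C * 2 ^ α / (τ * (α - 1))) :=
    calc ∑ i ∈ Ioc m n, l i / (τ + σ * l i)
        ≤ ∑ i ∈ Ioc m n, C * n / τ * (i : ℝ) ^ (-α) := by
          refine sum_le_sum fun i hi ↦ ?_
          have hi : i ∈ Icc 1 n := by simp only [mem_Ioc, mem_Icc] at hi ⊢; omega
          calc l i / (τ + σ * l i) ≤ l i / τ := div_add_mul_le_div hτ hσ.le (hl i hi)
            _ ≤ C * n * (i : ℝ) ^ (-α) / τ := by gcongr; exact hub i hi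
            _ = C * n / τ * (i : ℝ) ^ (-α) := by ring
      _ ≤ C * n / τ * ((m : ℝ) ^ (1 - α) / (α - 1)) := by
          rw [← mul_sum]
          gcongr
          exact sum_Ioc_rpow_neg_le hα hm n
      _ = n * (m : ℝ) ^ (1 - α) * (C / (τ * (α - 1))) := by field_simp
      _ ≤ 2 ^ α * m * (C / (τ * (α - 1))) := by
          have : 0 ≤ C / (τ * (α - 1)) := div_nonneg hC (mul_nonneg hτ.le (by linarith))
          gcongr ?_ * _
          exact mul_rpow_one_sub_le hm0 hnm
      _ = m * (C * 2 ^ α / (τ * (α - 1))) := by ring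
  rw [show Icc 1 n = Ioc 0 n from Icc_add_one_left_eq_Ioc 0 n, ← sum_Ioc_consecutive _ m.zero_le hmn, mul_add]
  exact add_le_add hhead htail

lemma le_sum_sq_div_add_mul (hτ : 0 < τ) (hσ : 0 ≤ σ) (hc : 0 ≤ c) (hα : 0 ≤ α)
    (hlb : ∀ i ∈ Icc 1 n, c * n * (i : ℝ) ^ (-α) ≤ l i) (hmα : (m : ℝ) ^ α ≤ n) (hmn : m ≤ n) :
    m * (c / (τ + σ * c)) ^ 2 ≤ ∑ i ∈ Icc 1 n, (l i / (τ + σ * l i)) ^ 2 := by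
  have hc_le : ∀ i ∈ Icc 1 m, c ≤ l i := fun i hi ↦ by
    obtain ⟨hi1, him⟩ := mem_Icc.1 hi
    have hi0 : (0 : ℝ) < i := Nat.cast_pos.2 hi1
    have hiα : (i : ℝ) ^ α ≤ n := (Real.rpow_le_rpow hi0.le (Nat.cast_le.2 him) hα).trans hmα
    nlinarith [hlb i (mem_Icc.2 ⟨hi1, him.trans hmn⟩), one_le_mul_rpow_neg hi0 hiα]
  calc m * (c / (τ + σ * c)) ^ 2 ≤ ∑ i ∈ Icc 1 m, (l i / (τ + σ * l i)) ^ 2 := by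
        simpa using card_nsmul_le_sum (Icc 1 m) _ _ fun i hi ↦
          pow_le_pow_left₀ (by positivity) (div_add_mul_le_div_add_mul hτ hσ hc (hc_le i hi)) 2
    _ ≤ ∑ i ∈ Icc 1 n, (l i / (τ + σ * l i)) ^ 2 :=
        sum_le_sum_of_subset_of_nonneg (Icc_subset_Icc_right hmn) fun _ _ _ ↦ sq_nonneg _

end Spectrum

/-- under the two-sided eigenvalue bound, the ratio
`(∑ bₙᵢ)/(∑ bₙᵢ²)` is bounded above and below by positive constants for large `n`. -/
theorem stmt18
    (τ2 σ2 α : ℝ) (hτ : 0 < τ2) (hσ : 0 < σ2) (hα : 1 < α)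
    (lam : ℕ → ℕ → ℝ)
    (c C : ℝ) (hc : 0 < c) (hcC : c ≤ C)
    (hlb : ∀ (n i : ℕ), 1 ≤ i → i ≤ n → c * (n : ℝ) * (i : ℝ) ^ (-α) ≤ lam n i)
    (hub : ∀ (n i : ℕ), 1 ≤ i → i ≤ n → lam n i ≤ C * (n : ℝ) * (i : ℝ) ^ (-α)) :
    ∃ c₁ c₂ : ℝ, 0 < c₁ ∧ c₁ ≤ c₂ ∧
      ∀ᶠ n : ℕ in atTop,
        c₁ ≤ (∑ i ∈ Finset.Icc 1 n, lam n i / (τ2 + σ2 * lam n i)) /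
              (∑ i ∈ Finset.Icc 1 n, (lam n i / (τ2 + σ2 * lam n i)) ^ 2) ∧
        (∑ i ∈ Finset.Icc 1 n, lam n i / (τ2 + σ2 * lam n i)) /
              (∑ i ∈ Finset.Icc 1 n, (lam n i / (τ2 + σ2 * lam n i)) ^ 2) ≤ c₂ := by
  set K := σ2⁻¹ + C * 2 ^ α / (τ2 * (α - 1))
  set b₀ := c / (τ2 + σ2 * c)
  have hb₀ : 0 < b₀ := by positivity
  have hC : 0 ≤ C := hc.le.trans hcC
  have hK : 0 ≤ K := add_nonneg (inv_nonneg.2 hσ.le)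
    (div_nonneg (by positivity) (mul_nonneg hτ.le (by linarith)))
  refine ⟨σ2, max σ2 (K / b₀ ^ 2), hσ, le_max_left _ _, ?_⟩
  filter_upwards [eventually_ge_atTop 1] with n hn
  have hlb' : ∀ i ∈ Icc 1 n, c * n * (i : ℝ) ^ (-α) ≤ lam n i :=
    fun i hi ↦ hlb n i (mem_Icc.1 hi).1 (mem_Icc.1 hi).2
  have hub' : ∀ i ∈ Icc 1 n, lam n i ≤ C * n * (i : ℝ) ^ (-α) :=
    fun i hi ↦ hub n i (mem_Icc.1 hi).1 (mem_Icc.1 hi).2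
  have hlam : ∀ i ∈ Icc 1 n, 0 ≤ lam n i := fun i hi ↦
    (by positivity : (0 : ℝ) ≤ c * n * (i : ℝ) ^ (-α)).trans (hlb' i hi)
  obtain ⟨m, hm, hmα, hnm⟩ :=
    exists_nat_rpow_le_le_two_mul_rpow (zero_lt_one.trans hα) (Nat.one_le_cast.2 hn : (1 : ℝ) ≤ n)
  have hmn : m ≤ n := by
    exact_mod_cast (Real.self_le_rpow_of_one_le (Nat.one_le_cast.2 hm) hα.le).trans hmα
  have hm0 : (0 : ℝ) < m := Nat.cast_pos.2 hm
  have hQ := le_sum_sq_div_add_mul hτ hσ.le hc.le (by linarith) hlb' hmα hmn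
  have hQpos := (mul_pos hm0 (pow_pos hb₀ 2)).trans_le hQ
  refine ⟨le_sum_div_add_mul_div_sum_sq hτ.le hσ.le hlam hQpos, ?_⟩
  calc _ ≤ m * K / (m * b₀ ^ 2) :=
        div_le_div₀ (by positivity) (sum_div_add_mul_le hτ hσ hα hC hlam hub' hm hmn hnm)
          (by positivity) hQ
    _ = K / b₀ ^ 2 := mul_div_mul_left _ _ hm0.ne'
    _ ≤ _ := le_max_right _ _
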